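/- Let K be a commutative ring and (V, Q), (V′, Q′) two quadratic forms over K. Then there is a K-algebra isomorphism from the ℤ/2-graded tensor product Cl(V, Q) ⊗̂_K Cl(V′, Q′) onto Cl(V ⊕ V′, Q ⊕ Q′), sending c(v) ⊗ 1 ↦ c(v, 0) and 1 ⊗ c(v′) ↦ c(0, v′), and this isomorphism respects the ℤ/2-gradings. -/
import Mathlib

open CliffordAlgebra
open scoped TensorProduct

private lemma map_mem_evenOdd_aux {R M N : Type*} [CommRing R] [AddCommGroup M] [AddCommGroup N]
    [Module R M] [Module R N] {Q : QuadraticForm R M} {Qₙ : QuadraticForm R N}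
    (f : Q →qᵢ Qₙ) {i : ZMod 2} {x : CliffordAlgebra Q} (hx : x ∈ evenOdd Q i) :
    CliffordAlgebra.map f x ∈ evenOdd Qₙ i := by
  induction hx using Submodule.iSup_induction' with
  | mem j x hx =>
    refine Submodule.mem_iSup_of_mem j ?_
    have hι : Submodule.map (CliffordAlgebra.map f).toLinearMap (LinearMap.range (ι Q)) ≤
        LinearMap.range (ι Qₙ) := by
      rintro _ ⟨_, ⟨m, rfl⟩, rfl⟩
      exact ⟨f m, (CliffordAlgebra.map_apply_ι f m).symm⟩
    have : Submodule.map (CliffordAlgebra.map f).toLinearMap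
        (LinearMap.range (ι Q) ^ (j : ℕ)) ≤ LinearMap.range (ι Qₙ) ^ (j : ℕ) := by
      rw [Submodule.map_pow]
      gcongr
    exact this ⟨x, hx, rfl⟩
  | zero => simp
  | add x y _ _ ihx ihy => rw [map_add]; exact add_mem ihx ihy

/-- There is a `K`-algebra isomorphism from the ℤ/2-graded tensor product
`Cl(V, Q) ⊗̂_K Cl(V′, Q′)` onto `Cl(V ⊕ V′, Q ⊕ Q′)`, sending
`c(v) ⊗ 1 ↦ c(v, 0)` and `1 ⊗ c(v′) ↦ c(0, v′)`, and it respects the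
ℤ/2-gradings. -/
theorem stmt_10 {R M M' : Type*} [CommRing R] [AddCommGroup M] [AddCommGroup M']
    [Module R M] [Module R M'] (Q : QuadraticForm R M) (Q' : QuadraticForm R M') :
    ∃ f : (evenOdd Q ᵍ⊗[R] evenOdd Q') ≃ₐ[R] CliffordAlgebra (Q.prod Q'),
      (∀ v : M, f (GradedTensorProduct.tmul _ (ι Q v) 1) = ι (Q.prod Q') (v, 0)) ∧
      (∀ v' : M', f (GradedTensorProduct.tmul _ (1 : CliffordAlgebra Q) (ι Q' v')) =
        ι (Q.prod Q') (0, v')) ∧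
      (∀ (i j : ZMod 2) (a : CliffordAlgebra Q) (b : CliffordAlgebra Q'),
        a ∈ evenOdd Q i → b ∈ evenOdd Q' j →
          f (GradedTensorProduct.tmul _ a b) ∈ evenOdd (Q.prod Q') (i + j)) := by
  have hs : ∀ x, (prodEquiv Q Q').symm x = toProd Q Q' x := fun _ => rfl
  refine ⟨(prodEquiv Q Q').symm, ?_, ?_, ?_⟩
  · intro v
    rw [hs]
    exact toProd_ι_tmul_one Q Q' v
  · intro v'
    rw [hs]
    exact toProd_one_tmul_ι Q Q' v'
  · intro i j a b ha hb
    rw [hs]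
    rw [toProd, GradedTensorProduct.lift_tmul]
    exact SetLike.mul_mem_graded (map_mem_evenOdd_aux _ ha) (map_mem_evenOdd_aux _ hb)
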